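/- Let d ≥ 2 be an integer and β > 0. Define ψ(y) = 2(d − 2) e^{β(1+y)} / (e^{2β} + e^{2βy}) and the scale density s(x) = (1 − x²)^{−1/2} · exp( − ∫_0^x ψ(y)/(1 − y²) dy ) for x ∈ (−1, 1). Then the improper integral ∫_{−1}^0 s(x) dx is finite if and only if d − 2 < cosh(2β). -/

import Mathlib

open Real

/-- `ψ(y) = 2(d−2)e^{β(1+y)} / (e^{2β} + e^{2βy})`. -/
noncomputable def psi (d : ℕ) (β y : ℝ) : ℝ :=
  2 * ((d : ℝ) - 2) * exp (β * (1 + y)) / (exp (2 * β) + exp (2 * β * y))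

/-- Scale density `s(x) = (1 − x²)^{−1/2} exp(−∫₀ˣ ψ(y)/(1 − y²) dy)` of the
two-token overlap diffusion. -/
noncomputable def scaleDensity (d : ℕ) (β x : ℝ) : ℝ :=
  (1 - x ^ 2) ^ (-(1 / 2 : ℝ)) * exp (-∫ y in (0 : ℝ)..x, psi d β y / (1 - y ^ 2))

namespace ScaleAux

open Set MeasureTheory intervalIntegral

noncomputable def uu (β y : ℝ) : ℝ := (1 - y) * Real.cosh (β * (1 - y))

noncomputable def gg (d : ℕ) (β y : ℝ) : ℝ :=
  ((d : ℝ) - 2) * (2 * Real.cosh (2 * β) - uu β y) /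
    ((1 + y) * (uu β y * (2 * Real.cosh (2 * β))))

lemma uu_hasDerivAt (β y : ℝ) :
    HasDerivAt (uu β)
      (-(Real.cosh (β * (1 - y)) + β * (1 - y) * Real.sinh (β * (1 - y)))) y := by
  have h1 : HasDerivAt (fun y : ℝ => 1 - y) (-1) y := by
    simpa using (hasDerivAt_id y).const_sub 1
  have h2 : HasDerivAt (fun y : ℝ => β * (1 - y)) (β * (-1)) y := h1.const_mul β
  have h3 : HasDerivAt (fun y : ℝ => Real.cosh (β * (1 - y)))
      (Real.sinh (β * (1 - y)) * (β * (-1))) y := (Real.hasDerivAt_cosh _).comp y h2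
  have h4 := h1.mul h3
  exact h4.congr_deriv (by ring)

lemma one_le_uu {β y : ℝ} (hy : y ≤ 0) : 1 ≤ uu β y := by
  have h1 : (1:ℝ) ≤ 1 - y := by linarith
  have h2 : (1:ℝ) ≤ Real.cosh (β * (1 - y)) := Real.one_le_cosh _
  unfold uu
  nlinarith

lemma uu_lip (β : ℝ) (hβ : 0 < β) {y : ℝ} (hy : y ∈ Icc (-1:ℝ) 0) :
    |uu β y - 2 * Real.cosh (2*β)|
      ≤ (Real.cosh (2*β) + 2*β*Real.sinh (2*β)) * (y + 1) := by
  set C0 := Real.cosh (2*β) + 2*β*Real.sinh (2*β) with hC0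
  have hbound : ∀ z ∈ Ico (-1:ℝ) 0,
      ‖-(Real.cosh (β*(1-z)) + β*(1-z)*Real.sinh (β*(1-z)))‖ ≤ C0 := by
    intro z hz
    have ht1 : (1:ℝ) ≤ 1 - z := by linarith [hz.2]
    have ht2 : 1 - z ≤ 2 := by linarith [hz.1]
    have hc : Real.cosh (β*(1-z)) ≤ Real.cosh (2*β) := by
      rw [Real.cosh_le_cosh, abs_of_nonneg (by nlinarith), abs_of_nonneg (by nlinarith)]
      nlinarith
    have hs : Real.sinh (β*(1-z)) ≤ Real.sinh (2*β) := Real.sinh_le_sinh.2 (by nlinarith)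
    have hs0 : 0 ≤ Real.sinh (β*(1-z)) := by
      have := Real.sinh_le_sinh.2 (show (0:ℝ) ≤ β*(1-z) by nlinarith)
      simpa using this
    have hcs : 0 < Real.cosh (β*(1-z)) := Real.cosh_pos _
    have hprod : (1-z) * Real.sinh (β*(1-z)) ≤ 2 * Real.sinh (2*β) :=
      mul_le_mul ht2 hs hs0 (by norm_num)
    rw [Real.norm_eq_abs, abs_of_nonpos (by
      nlinarith [hcs, mul_nonneg (mul_nonneg hβ.le (by linarith : (0:ℝ) ≤ 1-z)) hs0])]
    rw [hC0]
    nlinarith [mul_le_mul_of_nonneg_left hprod hβ.le]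
  have hderiv : ∀ z ∈ Icc (-1:ℝ) 0,
      HasDerivWithinAt (uu β)
        (-(Real.cosh (β*(1-z)) + β*(1-z)*Real.sinh (β*(1-z)))) (Icc (-1:ℝ) 0) z :=
    fun z _ => (uu_hasDerivAt β z).hasDerivWithinAt
  have hlip := norm_image_sub_le_of_norm_deriv_le_segment' hderiv hbound y hy
  have huneg : uu β (-1) = 2 * Real.cosh (2*β) := by
    unfold uu
    norm_num [mul_comm]
  rw [huneg] at hlip
  simpa [Real.norm_eq_abs, sub_neg_eq_add, add_comm] using hlip

lemma hfun_eq (d : ℕ) (β y : ℝ) :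
    psi d β y / (1 - y^2) = ((d:ℝ) - 2) / ((1 + y) * uu β y) := by
  have hE : Real.exp (2*β) + Real.exp (2*β*y)
      = 2 * Real.exp (β*(1+y)) * Real.cosh (β*(1-y)) := by
    rw [Real.cosh_eq,
      show (2:ℝ)*β*y = β*(1+y) + -(β*(1-y)) by ring,
      show (2:ℝ)*β = β*(1+y) + β*(1-y) by ring,
      Real.exp_add, Real.exp_add]
    ring
  have hC : Real.cosh (β*(1-y)) ≠ 0 := (Real.cosh_pos _).ne'
  have hpsi : psi d β y = ((d:ℝ) - 2) / Real.cosh (β*(1-y)) := by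
    unfold psi
    rw [hE]
    field_simp
  rw [hpsi]
  unfold uu
  rw [div_div]
  congr 1
  ring

lemma gg_bound (d : ℕ) (β : ℝ) (hβ : 0 < β) (ha : 0 ≤ (d:ℝ) - 2) {y : ℝ}
    (hy1 : -1 < y) (hy2 : y ≤ 0) :
    |gg d β y| ≤ ((d:ℝ)-2) * (Real.cosh (2*β) + 2*β*Real.sinh (2*β))
      / (2 * Real.cosh (2*β)) := by
  set a := (d:ℝ) - 2
  set K := Real.cosh (2*β) with hK_def
  set C0 := Real.cosh (2*β) + 2*β*Real.sinh (2*β) with hC0_def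
  have hK : 0 < K := Real.cosh_pos _
  have hu : 1 ≤ uu β y := one_le_uu hy2
  have hu0 : 0 < uu β y := lt_of_lt_of_le one_pos hu
  have hy0 : 0 < 1 + y := by linarith
  have hs2 : 0 ≤ Real.sinh (2*β) := by
    have := Real.sinh_le_sinh.2 (show (0:ℝ) ≤ 2*β by linarith)
    simpa using this
  have hC0 : 0 ≤ C0 := by
    have : (0:ℝ) < Real.cosh (2*β) := Real.cosh_pos _
    rw [hC0_def]; nlinarith
  have hD : 0 < (1+y) * (uu β y * (2*K)) := by positivity
  have hlip := uu_lip β hβ ⟨hy1.le, hy2⟩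
  have hnum : |2*K - uu β y| ≤ C0 * (y+1) := by
    rw [abs_sub_comm]; exact hlip
  unfold gg
  rw [abs_div, abs_mul, abs_of_nonneg ha, abs_of_pos hD]
  calc a * |2*K - uu β y| / ((1+y) * (uu β y * (2*K)))
      ≤ a * (C0 * (y+1)) / ((1+y) * (1 * (2*K))) := by
        apply div_le_div₀ (mul_nonneg ha (mul_nonneg hC0 (by linarith)))
          (mul_le_mul_of_nonneg_left hnum ha) (mul_pos hy0 (by positivity))
        apply mul_le_mul_of_nonneg_left _ hy0.le
        apply mul_le_mul_of_nonneg_right hu (by positivity)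
    _ = a * C0 / (2*K) := by
        rw [one_mul, div_eq_div_iff (by positivity) (by positivity)]
        ring

lemma scaleDensity_eq (d : ℕ) (β : ℝ) (hβ : 0 < β) {x : ℝ} (hx : x ∈ Ioo (-1:ℝ) 0) :
    scaleDensity d β x
      = (1-x) ^ (-(1/2:ℝ)) * (1+x) ^ (-((1 + ((d:ℝ)-2)/Real.cosh (2*β))/2))
        * Real.exp (∫ y in x..0, gg d β y) := by
  set a := (d:ℝ) - 2 with ha_def
  set K := Real.cosh (2*β) with hK_def
  have hK : 0 < K := Real.cosh_pos _
  obtain ⟨hx1, hx2⟩ := hx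
  have hx0 : 0 < 1 + x := by linarith
  have hIcc : uIcc x (0:ℝ) = Icc x 0 := uIcc_of_le hx2.le
  have hcont1 : ContinuousOn (fun y : ℝ => (a/(2*K)) * (1+y)⁻¹) (uIcc x 0) := by
    rw [hIcc]
    apply ContinuousOn.mul continuousOn_const
    apply ContinuousOn.inv₀ (by fun_prop)
    intro z hz
    have := hz.1
    intro h
    simp only [Set.mem_Icc] at hz
    nlinarith [hz.1]
  have huupos : ∀ z ∈ Icc x (0:ℝ), 0 < uu β z := fun z hz =>
    lt_of_lt_of_le one_pos (one_le_uu hz.2)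
  have hcont2 : ContinuousOn (gg d β) (uIcc x 0) := by
    rw [hIcc]
    unfold gg
    apply ContinuousOn.div
    · apply Continuous.continuousOn
      unfold uu
      fun_prop
    · apply Continuous.continuousOn
      unfold uu
      fun_prop
    · intro z hz
      have h1 : 0 < 1 + z := by simp only [Set.mem_Icc] at hz; nlinarith [hz.1]
      have h2 := huupos z hz
      positivity
  have hint1 : IntervalIntegrable (fun y : ℝ => (a/(2*K)) * (1+y)⁻¹) volume x 0 :=
    hcont1.intervalIntegrable
  have hint2 : IntervalIntegrable (gg d β) volume x 0 := hcont2.intervalIntegrable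
  have hdecomp : Set.EqOn (fun y : ℝ => psi d β y / (1 - y^2))
      (fun y : ℝ => (a/(2*K)) * (1+y)⁻¹ + gg d β y) (uIcc x 0) := by
    intro z hz
    rw [hIcc] at hz
    have hz0 : 0 < 1 + z := by simp only [Set.mem_Icc] at hz; nlinarith [hz.1]
    have hu := huupos z hz
    simp only
    rw [hfun_eq]
    unfold gg
    have h2K : (0:ℝ) < 2*K := by positivity
    field_simp
    ring
  have hlog : (∫ y in x..0, (1+y)⁻¹) = -Real.log (1+x) := by
    have h1 := intervalIntegral.integral_comp_add_left (a := x) (b := 0)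
      (f := fun t : ℝ => t⁻¹) 1
    rw [h1]
    rw [_root_.integral_inv]
    · rw [show (1:ℝ) + 0 = 1 by norm_num, ← Real.log_inv]
      congr 1
      field_simp
    · rw [Set.uIcc_of_le (by linarith : (1:ℝ)+x ≤ 1+0)]
      rintro ⟨h1, h2⟩
      linarith
  have hval : (∫ y in x..0, psi d β y / (1 - y^2))
      = (a/(2*K)) * (-Real.log (1+x)) + ∫ y in x..0, gg d β y := by
    rw [intervalIntegral.integral_congr hdecomp,
      intervalIntegral.integral_add hint1 hint2,
      intervalIntegral.integral_const_mul, hlog]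
  unfold scaleDensity
  rw [intervalIntegral.integral_symm x 0, neg_neg, hval, Real.exp_add]
  have h1x2 : (1 - x^2 : ℝ) = (1-x)*(1+x) := by ring
  rw [h1x2, Real.mul_rpow (by linarith) (by linarith)]
  have hpow : Real.exp (a/(2*K) * (-Real.log (1+x))) = (1+x) ^ (-(a/(2*K))) := by
    rw [Real.rpow_def_of_pos hx0]
    congr 1
    ring
  rw [hpow]
  have hcomb : ((1+x):ℝ)^(-(1/2:ℝ)) * (1+x)^(-(a/(2*K))) = (1+x)^(-((1 + a/K)/2)) := by
    rw [← Real.rpow_add hx0]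
    congr 1
    field_simp
    ring
  calc (1-x)^(-(1/2:ℝ)) * (1+x)^(-(1/2:ℝ)) * ((1+x)^(-(a/(2*K))) * Real.exp (∫ y in x..0, gg d β y))
      = (1-x)^(-(1/2:ℝ)) * ((1+x)^(-(1/2:ℝ)) * (1+x)^(-(a/(2*K)))) * Real.exp (∫ y in x..0, gg d β y) := by ring
    _ = (1-x)^(-(1/2:ℝ)) * (1+x)^(-((1 + a/K)/2)) * Real.exp (∫ y in x..0, gg d β y) := by
        rw [hcomb]

lemma scaleDensity_continuousOn (d : ℕ) (β : ℝ) :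
    ContinuousOn (scaleDensity d β) (Ioo (-1:ℝ) 0) := by
  have hfc : ContinuousOn (fun y : ℝ => psi d β y / (1 - y^2)) (Ioo (-1:ℝ) 1) := by
    apply ContinuousOn.div
    · apply Continuous.continuousOn
      unfold psi
      apply Continuous.div (by fun_prop) (by fun_prop)
      intro y
      positivity
    · fun_prop
    · intro y hy
      have h1 := hy.1; have h2 := hy.2
      have : 0 < 1 - y^2 := by nlinarith
      exact this.ne'
  have hprim : ContinuousOn (fun x : ℝ => ∫ y in (0:ℝ)..x, psi d β y/(1-y^2))
      (Ioo (-1:ℝ) 1) := by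
    intro x hx
    have h0 : (0:ℝ) ∈ Ioo (-1:ℝ) 1 := by norm_num
    have hsub : uIcc (0:ℝ) x ⊆ Ioo (-1:ℝ) 1 := (Set.ordConnected_Ioo).uIcc_subset h0 hx
    have hii : IntervalIntegrable (fun y : ℝ => psi d β y/(1-y^2)) volume 0 x :=
      (hfc.mono hsub).intervalIntegrable
    have hd := intervalIntegral.integral_hasDerivAt_right hii
      (hfc.stronglyMeasurableAtFilter isOpen_Ioo x hx)
      (hfc.continuousAt (isOpen_Ioo.mem_nhds hx))
    exact hd.continuousAt.continuousWithinAt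
  intro x hx
  have hx' : x ∈ Ioo (-1:ℝ) 1 := ⟨hx.1, lt_trans hx.2 one_pos⟩
  unfold scaleDensity
  apply ContinuousWithinAt.mul
  · apply ContinuousWithinAt.rpow_const
    · exact ((continuous_const.sub (continuous_pow 2)).continuousAt).continuousWithinAt
    · left
      have h1 := hx.1; have h2 := hx.2
      have : 0 < 1 - x^2 := by nlinarith
      exact this.ne'
  · apply Real.continuous_exp.continuousAt.comp_continuousWithinAt
    exact (((hprim x hx').mono (Set.Ioo_subset_Ioo_right (by norm_num))).neg)

lemma integrableOn_one_add_rpow_iff (q : ℝ) :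
    IntegrableOn (fun x : ℝ => (1+x)^q) (Set.Ioo (-1:ℝ) 0) ↔ -1 < q := by
  rw [← intervalIntegrable_iff_integrableOn_Ioo_of_le (by norm_num : (-1:ℝ) ≤ 0)]
  constructor
  · intro h
    have h2 := h.comp_sub_right 1
    have he : (fun x : ℝ => (1+(x-1))^q) = fun x : ℝ => x^q := by
      funext z
      norm_num
    rw [he] at h2
    norm_num at h2
    rw [intervalIntegrable_iff_integrableOn_Ioo_of_le zero_le_one] at h2
    exact (integrableOn_Ioo_rpow_iff zero_lt_one).1 h2
  · intro h
    have h1 : IntervalIntegrable (fun x : ℝ => x ^ q) volume 0 1 :=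
      intervalIntegral.intervalIntegrable_rpow' h
    have h2 := h1.comp_add_right 1
    have he : (fun x : ℝ => ((x+1):ℝ)^q) = fun x : ℝ => (1+x)^q := by
      funext z
      rw [add_comm]
    rw [he] at h2
    norm_num at h2
    exact h2

end ScaleAux

/-- The improper integral `∫₋₁⁰ s(x) dx` is finite if and only if `d − 2 < cosh(2β)`:
the phase-transition boundary for attraction of the antipodal configuration. -/
theorem scale_function_finite_at_neg_one_iff (d : ℕ) (hd : 2 ≤ d) (β : ℝ) (hβ : 0 < β) :
    MeasureTheory.IntegrableOn (scaleDensity d β) (Set.Ioo (-1 : ℝ) 0)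
      ↔ (d : ℝ) - 2 < cosh (2 * β) := by
  classical
  open Set MeasureTheory in
  have ha : 0 ≤ (d:ℝ) - 2 := by
    have : (2:ℝ) ≤ d := by exact_mod_cast hd
    linarith
  set a := (d:ℝ) - 2 with ha_def
  set K := Real.cosh (2*β) with hK_def
  have hK : 0 < K := Real.cosh_pos _
  set p := (1 + a/K)/2 with hp_def
  have hs2 : 0 ≤ Real.sinh (2*β) := by
    have := Real.sinh_le_sinh.2 (show (0:ℝ) ≤ 2*β by linarith)
    simpa using this
  set M := a * (Real.cosh (2*β) + 2*β*Real.sinh (2*β)) / (2*K) with hM_def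
  have hM0 : 0 ≤ M := by
    have hc : (0:ℝ) < Real.cosh (2*β) := Real.cosh_pos _
    rw [hM_def]
    apply div_nonneg _ (by rw [hK_def]; positivity)
    nlinarith [mul_nonneg ha hc.le,
      mul_nonneg ha (mul_nonneg (by linarith : (0:ℝ) ≤ 2*β) hs2)]
  have hRb : ∀ x ∈ Ioo (-1:ℝ) 0, |∫ y in x..0, ScaleAux.gg d β y| ≤ M := by
    intro x hx
    have hb : ∀ y ∈ Set.uIoc x 0, ‖ScaleAux.gg d β y‖ ≤ M := by
      intro y hy
      rw [Set.uIoc_of_le hx.2.le] at hy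
      rw [Real.norm_eq_abs]
      exact ScaleAux.gg_bound d β hβ ha (lt_trans hx.1 hy.1) hy.2
    have h1 := intervalIntegral.norm_integral_le_of_norm_le_const hb
    rw [Real.norm_eq_abs] at h1
    have h2 : |(0:ℝ) - x| ≤ 1 := by
      rw [abs_of_nonneg (by linarith [hx.2])]
      linarith [hx.1]
    calc |∫ y in x..0, ScaleAux.gg d β y| ≤ M * |0 - x| := h1
      _ ≤ M * 1 := mul_le_mul_of_nonneg_left h2 hM0
      _ = M := mul_one M
  set k1 := (2:ℝ)^(-(1/2:ℝ)) * Real.exp (-M) with hk1_def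
  have hk1 : 0 < k1 := by rw [hk1_def]; positivity
  have hlow : ∀ x ∈ Ioo (-1:ℝ) 0, k1 * (1+x)^(-p) ≤ scaleDensity d β x := by
    intro x hx
    have hid := ScaleAux.scaleDensity_eq d β hβ hx
    set R := ∫ y in x..0, ScaleAux.gg d β y with hR_def
    have hB : 0 < ((1+x):ℝ)^(-p) := Real.rpow_pos_of_pos (by linarith [hx.1]) _
    have hA0 : 0 ≤ ((1-x):ℝ)^(-(1/2:ℝ)) := Real.rpow_nonneg (by linarith [hx.2]) _
    have hA2 : ((2:ℝ))^(-(1/2:ℝ)) ≤ ((1-x):ℝ)^(-(1/2:ℝ)) :=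
      Real.rpow_le_rpow_of_nonpos (by linarith [hx.2]) (by linarith [hx.1]) (by norm_num)
    have hC2 : Real.exp (-M) ≤ Real.exp R :=
      Real.exp_le_exp.2 (by linarith [(abs_le.1 (hRb x hx)).1])
    rw [hid]
    have hh1 : (2:ℝ)^(-(1/2:ℝ)) * Real.exp (-M) * ((1+x):ℝ)^(-p)
        ≤ ((1-x):ℝ)^(-(1/2:ℝ)) * Real.exp (-M) * ((1+x):ℝ)^(-p) :=
      mul_le_mul_of_nonneg_right (mul_le_mul_of_nonneg_right hA2 (Real.exp_pos (-M)).le) hB.le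
    have hh2 : ((1-x):ℝ)^(-(1/2:ℝ)) * Real.exp (-M) * ((1+x):ℝ)^(-p)
        ≤ ((1-x):ℝ)^(-(1/2:ℝ)) * Real.exp R * ((1+x):ℝ)^(-p) :=
      mul_le_mul_of_nonneg_right (mul_le_mul_of_nonneg_left hC2 hA0) hB.le
    rw [hk1_def]
    nlinarith [hh1, hh2]
  have hup : ∀ x ∈ Ioo (-1:ℝ) 0, scaleDensity d β x ≤ Real.exp M * (1+x)^(-p) := by
    intro x hx
    have hid := ScaleAux.scaleDensity_eq d β hβ hx
    set R := ∫ y in x..0, ScaleAux.gg d β y with hR_def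
    have hB : 0 < ((1+x):ℝ)^(-p) := Real.rpow_pos_of_pos (by linarith [hx.1]) _
    have hA1 : ((1-x):ℝ)^(-(1/2:ℝ)) ≤ 1 := by
      have := Real.rpow_le_rpow_of_nonpos one_pos
        (by linarith [hx.2] : (1:ℝ) ≤ 1 - x) (by norm_num : -(1/2:ℝ) ≤ 0)
      simpa [Real.one_rpow] using this
    have hC1 : Real.exp R ≤ Real.exp M :=
      Real.exp_le_exp.2 (by linarith [(abs_le.1 (hRb x hx)).2])
    rw [hid]
    have hh1 : ((1-x):ℝ)^(-(1/2:ℝ)) * ((1+x):ℝ)^(-p) * Real.exp R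
        ≤ 1 * ((1+x):ℝ)^(-p) * Real.exp R :=
      mul_le_mul_of_nonneg_right (mul_le_mul_of_nonneg_right hA1 hB.le) (Real.exp_pos R).le
    have hh2 : ((1+x):ℝ)^(-p) * Real.exp R ≤ ((1+x):ℝ)^(-p) * Real.exp M :=
      mul_le_mul_of_nonneg_left hC1 hB.le
    nlinarith [hh1, hh2]
  have hPmeas : AEStronglyMeasurable (fun x : ℝ => ((1+x):ℝ)^(-p))
      (MeasureTheory.volume.restrict (Ioo (-1:ℝ) 0)) := by
    apply ContinuousOn.aestronglyMeasurable _ measurableSet_Ioo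
    intro x hx
    apply ContinuousWithinAt.rpow_const
      ((continuous_const.add continuous_id).continuousAt.continuousWithinAt)
    left
    have : (0:ℝ) < 1 + x := by linarith [hx.1]
    exact this.ne'
  constructor
  · intro hInt
    have hP : IntegrableOn (fun x : ℝ => k1 * ((1+x):ℝ)^(-p)) (Ioo (-1:ℝ) 0) := by
      apply MeasureTheory.Integrable.mono' hInt (hPmeas.const_mul k1)
      filter_upwards [MeasureTheory.ae_restrict_mem measurableSet_Ioo] with x hx
      rw [Real.norm_eq_abs, abs_of_nonneg
        (mul_nonneg hk1.le (Real.rpow_nonneg (by linarith [hx.1]) _))]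
      exact hlow x hx
    have hP2 : IntegrableOn (fun x : ℝ => ((1+x):ℝ)^(-p)) (Ioo (-1:ℝ) 0) := by
      have h3 := hP.const_mul k1⁻¹
      have he : (fun x : ℝ => k1⁻¹ * (k1 * ((1+x):ℝ)^(-p))) = fun x : ℝ => ((1+x):ℝ)^(-p) := by
        funext z
        rw [← mul_assoc, inv_mul_cancel₀ hk1.ne', one_mul]
      rwa [he] at h3
    have h4 := (ScaleAux.integrableOn_one_add_rpow_iff (-p)).1 hP2
    have h5 : a / K < 1 := by rw [hp_def] at h4; linarith
    exact (div_lt_one hK).1 h5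
  · intro hlt
    have h5 : a / K < 1 := (div_lt_one hK).2 hlt
    have hp1 : -1 < -p := by rw [hp_def]; linarith
    have hPint := (ScaleAux.integrableOn_one_add_rpow_iff (-p)).2 hp1
    apply MeasureTheory.Integrable.mono' (hPint.const_mul (Real.exp M))
      ((ScaleAux.scaleDensity_continuousOn d β).aestronglyMeasurable measurableSet_Ioo)
    filter_upwards [MeasureTheory.ae_restrict_mem measurableSet_Ioo] with x hx
    have hnn : 0 ≤ scaleDensity d β x :=
      le_trans (mul_nonneg hk1.le (Real.rpow_nonneg (by linarith [hx.1]) _)) (hlow x hx)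
    rw [Real.norm_eq_abs, abs_of_nonneg hnn]
    exact hup x hx
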